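/- arXiv:2010.13134 — 3 statements merged into one kernel-verified Lean document; each statement's English description precedes it below -/
import Mathlib

section
/- In dimension n = 1, for λ > 0 and α ≠ 0 real, the Fourier transform of x ↦ e^{iλαx²/2} (as a tempered distribution) is the function ξ ↦ λ^{-1/2}|α|^{-1/2} e^{iπ sgn(α)/4} e^{-iξ²/(2λα)}. -/
/-!
For `0 < re b`, Fubini and the Gaussian integral `fourierIntegral_gaussian` give
`∫ e^{-b x²} ft1 φ = ∫ ft1 (e^{-b ·²}) φ` with
`ft1 (e^{-b ·²}) ξ = (2π)^{-1/2} (π/b)^{1/2} e^{-ξ²/(4b)}`.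
Both sides stay continuous in `b` up to the imaginary axis away from `0`, by dominated
convergence (`‖(π/b)^{1/2}‖ = √(π/‖b‖)`), so the identity also holds at `b = -iλα/2`. There
`π/b = 2πi/(λα)`, whose principal square root carries the phase `e^{iπ sgn(α)/4}`.
-/

open MeasureTheory Real

/-- One-dimensional Fourier transform, convention `(2π)^{-1/2} ∫ e^{-ixξ} u(x) dx`. -/
noncomputable def ft1 (u : ℝ → ℂ) (ξ : ℝ) : ℂ :=
  (((2 * Real.pi) ^ (-(1 : ℝ) / 2) : ℝ) : ℂ) * ∫ x : ℝ, Complex.exp (-Complex.I * x * ξ) * u x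

open Complex (I)
open scoped Complex Topology
open Filter

lemma integral_mul_ft1 {f g : ℝ → ℂ} (hf : Integrable f) (hg : Integrable g) :
    ∫ x, f x * ft1 g x = ∫ ξ, ft1 f ξ * g ξ := by
  have hprod : Integrable (Function.uncurry fun x t : ℝ => cexp (-I * t * x) * (f x * g t))
      (volume.prod volume) :=
    (hf.mul_prod hg).bdd_mul (c := 1) (by fun_prop)
      (ae_of_all _ fun p => by simp [Complex.norm_exp])
  calc ∫ x, f x * ft1 g x
      = ((2 * π) ^ (-(1 : ℝ) / 2) : ℝ) * ∫ x : ℝ, ∫ t : ℝ, cexp (-I * t * x) * (f x * g t) := by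
        simp_rw [ft1, ← integral_const_mul]
        congr 1; ext x; congr 1; ext t; ring
    _ = ((2 * π) ^ (-(1 : ℝ) / 2) : ℝ) * ∫ t : ℝ, ∫ x : ℝ, cexp (-I * t * x) * (f x * g t) := by
        rw [integral_integral_swap hprod]
    _ = ∫ ξ, ft1 f ξ * g ξ := by
        simp_rw [ft1, ← integral_const_mul, ← integral_mul_const]
        congr 1; ext t; congr 1; ext x; ring_nf

open FourierTransform in
lemma ft1_eq_fourier (u : ℝ → ℂ) (ξ : ℝ) :
    ft1 u ξ = (((2 * π) ^ (-(1 : ℝ) / 2) : ℝ) : ℂ) * 𝓕 u (ξ / (2 * π)) := by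
  rw [ft1, Real.fourier_real_eq_integral_exp_smul]
  congr 1
  refine integral_congr_ae (ae_of_all _ fun x => ?_)
  simp only [smul_eq_mul]
  congr 2
  push_cast
  field_simp

open FourierTransform in
lemma integrable_ft1 (φ : SchwartzMap ℝ ℂ) : Integrable (ft1 φ) := by
  simp_rw [funext (ft1_eq_fourier φ)]
  exact ((𝓕 φ).integrable.comp_div (by positivity)).const_mul _

/-- The closed form of `ft1 (fun x ↦ exp (-b x²))` for `0 < re b` (`ft1_cexp_neg_mul_sq`);
on the imaginary axis it is the Fresnel kernel. -/
noncomputable def ft1Gaussian (b : ℂ) (ξ : ℝ) : ℂ :=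
  (((2 * π) ^ (-(1 : ℝ) / 2) : ℝ) : ℂ) * (π / b) ^ (1 / 2 : ℂ) * cexp (-ξ ^ 2 / (4 * b))

lemma ft1_cexp_neg_mul_sq {b : ℂ} (hb : 0 < b.re) :
    ft1 (fun x : ℝ => cexp (-b * x ^ 2)) = ft1Gaussian b := by
  ext ξ
  have h := fourierIntegral_gaussian hb (-ξ)
  simp only [neg_mul, mul_neg, even_two, Even.neg_pow] at h ⊢
  rw [ft1, ft1Gaussian, mul_assoc, ← h]
  congr 2; ext x; congr 2; ring

lemma norm_cexp_neg_mul_sq_le_one {b : ℂ} (hb : 0 ≤ b.re) (x : ℝ) :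
    ‖cexp (-b * x ^ 2)‖ ≤ 1 := by
  rw [Complex.norm_exp, Real.exp_le_one_iff, ← Complex.ofReal_pow, neg_mul, Complex.neg_re,
    Complex.re_mul_ofReal, neg_nonpos]
  positivity

lemma norm_ft1Gaussian_le {b : ℂ} (hb : 0 ≤ b.re) (ξ : ℝ) :
    ‖ft1Gaussian b ξ‖ ≤ (2 * π) ^ (-(1 : ℝ) / 2) * √(π / ‖b‖) := by
  have hexp : ‖cexp (-ξ ^ 2 / (4 * b))‖ ≤ 1 := by
    rw [show -(ξ : ℂ) ^ 2 / (4 * b) = -(4 * b)⁻¹ * ξ ^ 2 by ring]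
    refine norm_cexp_neg_mul_sq_le_one ?_ ξ
    rw [Complex.inv_re]
    exact div_nonneg (by simpa using hb) (Complex.normSq_nonneg _)
  have hpow : ‖(π / b) ^ (1 / 2 : ℂ)‖ = √(π / ‖b‖) := by
    rw [show (1 / 2 : ℂ) = ((1 / 2 : ℝ) : ℂ) by push_cast; ring, Complex.norm_cpow_real,
      norm_div, Complex.norm_real, Real.norm_of_nonneg pi_pos.le, Real.sqrt_eq_rpow]
  rw [ft1Gaussian, norm_mul, norm_mul, Complex.norm_real, Real.norm_of_nonneg (by positivity),
    hpow]
  exact mul_le_of_le_one_right (by positivity) hexp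

lemma pi_div_mem_slitPlane {b : ℂ} (hb : 0 ≤ b.re) (hb0 : b ≠ 0) : π / b ∈ Complex.slitPlane := by
  rw [Complex.mem_slitPlane_iff, div_eq_mul_inv, Complex.re_ofReal_mul, Complex.im_ofReal_mul,
    Complex.inv_re, Complex.inv_im]
  rcases hb.lt_or_eq with hre | hre
  · exact Or.inl (mul_pos pi_pos (div_pos hre (Complex.normSq_pos.mpr hb0)))
  · have him : b.im ≠ 0 := fun him => hb0 (Complex.ext hre.symm him)
    exact Or.inr (by simp [him, hb0, pi_ne_zero])

lemma continuousAt_ft1Gaussian {b : ℂ} (hb : 0 ≤ b.re) (hb0 : b ≠ 0) (ξ : ℝ) :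
    ContinuousAt (ft1Gaussian · ξ) b := by
  unfold ft1Gaussian
  have hpow : ContinuousAt (fun b : ℂ => (π / b) ^ (1 / 2 : ℂ)) b :=
    (continuousAt_const.div continuousAt_id hb0).cpow continuousAt_const
      (pi_div_mem_slitPlane hb hb0)
  exact (continuousAt_const.mul hpow).mul <| Complex.continuous_exp.continuousAt.comp
    (continuousAt_const.div (continuousAt_const.mul continuousAt_id) (by simpa using hb0))

lemma continuousOn_integral_cexp_neg_mul_sq_mul {g : ℝ → ℂ} (hg : Integrable g) :
    ContinuousOn (fun b : ℂ => ∫ x : ℝ, cexp (-b * x ^ 2) * g x) {b | 0 ≤ b.re} := by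
  refine continuousOn_of_dominated (bound := fun x => ‖g x‖)
    (fun b _ => (by fun_prop : Continuous fun x : ℝ => cexp (-b * x ^ 2)).aestronglyMeasurable.mul
      hg.aestronglyMeasurable) (fun b hb => ae_of_all _ fun x => ?_) hg.norm
    (ae_of_all _ fun x => by fun_prop)
  rw [norm_mul]
  exact mul_le_of_le_one_left (norm_nonneg _) (norm_cexp_neg_mul_sq_le_one hb x)

lemma continuousOn_integral_ft1Gaussian_mul {φ : ℝ → ℂ} (hφ : Integrable φ) {r : ℝ} (hr : 0 < r) :
    ContinuousOn (fun b : ℂ => ∫ ξ, ft1Gaussian b ξ * φ ξ) {b | 0 ≤ b.re ∧ r ≤ ‖b‖} := by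
  refine continuousOn_of_dominated
    (bound := fun ξ => (2 * π) ^ (-(1 : ℝ) / 2) * √(π / r) * ‖φ ξ‖)
    (fun b _ => ?_) (fun b hb => ae_of_all _ fun ξ => ?_) (hφ.norm.const_mul _)
    (ae_of_all _ fun ξ => ?_)
  · exact (by unfold ft1Gaussian; fun_prop : Continuous (ft1Gaussian b)).aestronglyMeasurable.mul
      hφ.aestronglyMeasurable
  · rw [norm_mul]
    gcongr
    refine (norm_ft1Gaussian_le hb.1 ξ).trans ?_
    gcongr
    exact hb.2
  · exact fun b hb => (continuousAt_ft1Gaussian hb.1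
      (norm_pos_iff.mp (hr.trans_le hb.2)) ξ).continuousWithinAt.mul continuousWithinAt_const

lemma norm_le_norm_add_ofReal {b : ℂ} (hb : 0 ≤ b.re) {ε : ℝ} (hε : 0 ≤ ε) : ‖b‖ ≤ ‖b + ε‖ := by
  rw [← sq_le_sq₀ (norm_nonneg _) (norm_nonneg _), Complex.sq_norm, Complex.sq_norm,
    Complex.normSq_apply, Complex.normSq_apply]
  simp only [Complex.add_re, Complex.ofReal_re, Complex.add_im, Complex.ofReal_im, add_zero]
  nlinarith

lemma integral_cexp_neg_mul_sq_mul_ft1_of_re_pos {b : ℂ} (hb : 0 < b.re) {φ : ℝ → ℂ}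
    (hφ : Integrable φ) :
    ∫ x : ℝ, cexp (-b * x ^ 2) * ft1 φ x = ∫ ξ, ft1Gaussian b ξ * φ ξ := by
  rw [integral_mul_ft1 (integrable_cexp_neg_mul_sq hb) hφ, ft1_cexp_neg_mul_sq hb]

/-- Approach `b` by `b + ε`, `ε → 0⁺`: since `‖b‖ ≤ ‖b + ε‖`, the path stays where the
Gaussian side is dominated. -/
lemma integral_cexp_neg_mul_sq_mul_ft1 {b : ℂ} (hb : 0 ≤ b.re) (hb0 : b ≠ 0) {φ : ℝ → ℂ}
    (hφ : Integrable φ) (hφ' : Integrable (ft1 φ)) :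
    ∫ x : ℝ, cexp (-b * x ^ 2) * ft1 φ x = ∫ ξ, ft1Gaussian b ξ * φ ξ := by
  set S := {b' : ℂ | 0 ≤ b'.re ∧ ‖b‖ ≤ ‖b'‖}
  have hbS : b ∈ S := ⟨hb, le_rfl⟩
  have hpath : Tendsto (fun ε : ℝ => b + ε) (𝓝[>] 0) (𝓝[S] b) := by
    refine tendsto_nhdsWithin_iff.mpr ⟨?_, ?_⟩
    · have h : Continuous fun ε : ℝ => b + ε := by fun_prop
      simpa using h.continuousWithinAt.tendsto (x := 0) (s := Set.Ioi 0)
    · filter_upwards [self_mem_nhdsWithin] with ε (hε : 0 < ε)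
      exact ⟨by simp only [Complex.add_re, Complex.ofReal_re]; linarith,
        norm_le_norm_add_ofReal hb hε.le⟩
  have hL := (((continuousOn_integral_cexp_neg_mul_sq_mul hφ').mono fun _ h => h.1) b hbS).tendsto
  have hR := (continuousOn_integral_ft1Gaussian_mul hφ (norm_pos_iff.mpr hb0) b hbS).tendsto
  refine tendsto_nhds_unique ((hL.comp hpath).congr' ?_) (hR.comp hpath)
  filter_upwards [self_mem_nhdsWithin] with ε (hε : 0 < ε)
  exact integral_cexp_neg_mul_sq_mul_ft1_of_re_pos
    (by simp only [Complex.add_re, Complex.ofReal_re]; linarith) hφ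

lemma cpow_half_ofReal_mul_I {r : ℝ} (hr : r ≠ 0) :
    ((r : ℂ) * I) ^ (1 / 2 : ℂ) = √|r| * cexp (I * π * Real.sign r / 4) := by
  have hz : (r : ℂ) * I ≠ 0 := mul_ne_zero (Complex.ofReal_ne_zero.mpr hr) Complex.I_ne_zero
  have harg : Complex.arg (r * I) = Real.sign r * (π / 2) := by
    rcases hr.lt_or_gt with h | h
    · rw [Complex.arg_eq_neg_pi_div_two_iff.mpr (by simp [h]), Real.sign_of_neg h]; ring
    · rw [Complex.arg_eq_pi_div_two_iff.mpr (by simp [h]), Real.sign_of_pos h]; ring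
  rw [Complex.cpow_def_of_ne_zero hz, Complex.log, harg, norm_mul, Complex.norm_real,
    Complex.norm_I, mul_one, Real.norm_eq_abs,
    show ((Real.log |r| : ℂ) + (Real.sign r * (π / 2) : ℝ) * I) * (1 / 2)
      = (Real.log |r| / 2 : ℝ) + I * π * Real.sign r / 4 by push_cast; ring,
    Complex.exp_add, ← Complex.ofReal_exp, Real.sqrt_eq_rpow,
    Real.rpow_def_of_pos (abs_pos.mpr hr)]
  ring_nf

lemma ft1Gaussian_neg_I_mul_div_two {r : ℝ} (hr : r ≠ 0) (ξ : ℝ) :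
    ft1Gaussian (-(I * r / 2)) ξ
      = ((√|r|)⁻¹ : ℝ) * cexp (I * π * Real.sign r / 4) * cexp (-I * ξ ^ 2 / (2 * r)) := by
  have h2π : (0 : ℝ) < 2 * π := by positivity
  have hquot : (π : ℂ) / -(I * r / 2) = ((2 * π / r : ℝ) : ℂ) * I := by
    push_cast; field_simp; ring_nf; simp [Complex.I_sq]
  have hsign : Real.sign (2 * π / r) = Real.sign r := by
    rcases hr.lt_or_gt with h | h
    · rw [Real.sign_of_neg h, Real.sign_of_neg (div_neg_of_pos_of_neg h2π h)]
    · rw [Real.sign_of_pos h, Real.sign_of_pos (div_pos h2π h)]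
  have hconst : (2 * π) ^ (-(1 : ℝ) / 2) * √|2 * π / r| = (√|r|)⁻¹ := by
    rw [abs_div, abs_of_pos h2π, Real.sqrt_div' _ (abs_nonneg r), neg_div,
      Real.rpow_neg h2π.le, ← Real.sqrt_eq_rpow]
    field_simp
  have hexp : -(ξ : ℂ) ^ 2 / (4 * -(I * r / 2)) = -I * ξ ^ 2 / (2 * r) := by
    field_simp; ring_nf; simp [Complex.I_sq]
  rw [ft1Gaussian, hquot, cpow_half_ofReal_mul_I (div_ne_zero h2π.ne' hr), hsign, hexp,
    ← hconst]
  push_cast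
  ring

/-- One-dimensional Fresnel integral formula: the distributional Fourier transform of
`x ↦ e^{iλαx²/2}` is `ξ ↦ λ^{-1/2}|α|^{-1/2} e^{iπ sgn(α)/4} e^{-iξ²/(2λα)}`. -/
theorem stmt4 (lam α : ℝ) (hlam : 0 < lam) (hα : α ≠ 0) (φ : SchwartzMap ℝ ℂ) :
    ∫ x : ℝ, Complex.exp (Complex.I * lam * α * x ^ 2 / 2) * ft1 (⇑φ) x
      = ∫ ξ : ℝ,
          (((Real.sqrt lam)⁻¹ * (Real.sqrt |α|)⁻¹ : ℝ) : ℂ) *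
            Complex.exp (Complex.I * Real.pi * (Real.sign α : ℝ) / 4) *
            Complex.exp (-Complex.I * ξ ^ 2 / (2 * lam * α)) * φ ξ := by
  have hr : lam * α ≠ 0 := mul_ne_zero hlam.ne' hα
  have hsign : Real.sign (lam * α) = Real.sign α := by
    rcases hα.lt_or_gt with h | h
    · rw [Real.sign_of_neg h, Real.sign_of_neg (mul_neg_of_pos_of_neg hlam h)]
    · rw [Real.sign_of_pos h, Real.sign_of_pos (mul_pos hlam h)]
  have hb : 0 ≤ (-(I * (lam * α : ℝ) / 2)).re := by simp
  have hb0 : -(I * (lam * α : ℝ) / 2) ≠ 0 := by simpa using hr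
  have key := integral_cexp_neg_mul_sq_mul_ft1 hb hb0 φ.integrable (integrable_ft1 φ)
  simp_rw [ft1Gaussian_neg_I_mul_div_two hr, hsign, abs_mul, abs_of_pos hlam,
    Real.sqrt_mul hlam.le, mul_inv] at key
  convert key using 6 <;> push_cast <;> ring
end

section
/- Let A be a real symmetric n×n matrix depending continuously (C^k, k ≥ 1) on a parameter x near 0 in ℝⁿ, with A(0) non-degenerate. Write A(0) = P₀ Λ P₀ᵀ with P₀ orthogonal and Λ = diag(α₁,…,αₙ). Then there is a neighborhood of 0 and a C^k family of invertible matrices M(x) with M(0) = P₀ such that A(x) = M(x) Λ M(x)ᵀ on that neighborhood. -/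
/-!
Put `C(x) = A(x) A(0)⁻¹`, a matrix close to `1`. Squaring has derivative `2 • id` at `1`, so by
the inverse function theorem it has a smooth local inverse `√` near `1`; let `S(x) = √C(x)`.
Because `A(x)` and `A(0)` are symmetric, `A(0) S(x)ᵀ A(0)⁻¹` is a second square root of `C(x)`
close to `1`, hence equals `S(x)`. Therefore `A(x) = S(x)² A(0) = S(x) A(0) S(x)ᵀ`, and
`M(x) = S(x) P₀` works.
-/

open Filter Matrix Metric Topology
open scoped ContDiff

-- The operator norm makes square matrices a Banach algebra; its topology is the entrywise one.
attribute [local instance] Matrix.linftyOpNormedRing Matrix.linftyOpNormedAlgebra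

section LocalSqrt

variable {𝕜 R : Type*} [RCLike 𝕜] [NormedRing R] [NormedAlgebra 𝕜 R]

theorem hasFDerivAt_mul_self_one :
    HasFDerivAt (fun X : R => X * X)
      ((ContinuousLinearEquiv.smulLeft (Units.mk0 (2 : 𝕜) two_ne_zero) : R ≃L[𝕜] R) :
        R →L[𝕜] R) 1 := by
  refine ((hasFDerivAt_id (1 : R)).mul' (hasFDerivAt_id 1)).congr_fderiv ?_
  ext X
  simp [two_smul]

theorem exists_contDiffAt_sqrt_near_one [CompleteSpace R] :
    ∃ g : R → R, g 1 = 1 ∧ ContDiffAt 𝕜 ω g 1 ∧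
      (∀ᶠ Y in 𝓝 1, g Y * g Y = Y) ∧ ∀ᶠ X in 𝓝 1, g (X * X) = X := by
  have hsq : ContDiffAt 𝕜 ω (fun X : R => X * X) 1 := (contDiff_id.mul contDiff_id).contDiffAt
  have hsq_strict := hsq.hasStrictFDerivAt' hasFDerivAt_mul_self_one (by simp)
  refine ⟨hsq.localInverse hasFDerivAt_mul_self_one (by simp), ?_, ?_, ?_, ?_⟩
  · simpa using hsq.localInverse_apply_image hasFDerivAt_mul_self_one (by simp)
  · simpa using hsq.to_localInverse hasFDerivAt_mul_self_one (by simp)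
  · have h := hsq_strict.eventually_right_inverse
    rw [mul_one] at h
    exact h
  · exact hsq_strict.eventually_left_inverse

end LocalSqrt

namespace Matrix

section Congruence

variable {ι K : Type*} [Fintype ι] [DecidableEq ι] [CommRing K] {A A₀ S : Matrix ι ι K}

theorem transpose_conj_mul_self (hA : A.IsSymm) (hA₀ : A₀.IsSymm) (hA₀det : IsUnit A₀.det)
    (hS : S * S = A * A₀⁻¹) : A₀ * Sᵀ * A₀⁻¹ * (A₀ * Sᵀ * A₀⁻¹) = A * A₀⁻¹ := by
  have hinv : (A₀⁻¹)ᵀ = A₀⁻¹ := by rw [transpose_nonsing_inv, hA₀.eq]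
  calc A₀ * Sᵀ * A₀⁻¹ * (A₀ * Sᵀ * A₀⁻¹) = A₀ * (S * S)ᵀ * A₀⁻¹ := by
        rw [transpose_mul]
        simp only [Matrix.mul_assoc, nonsing_inv_mul_cancel_left _ _ hA₀det]
    _ = A₀ * A₀⁻¹ * A * A₀⁻¹ := by
        rw [hS, transpose_mul, hinv, hA.eq]
        simp only [Matrix.mul_assoc]
    _ = A * A₀⁻¹ := by rw [mul_nonsing_inv _ hA₀det, Matrix.one_mul]

theorem eq_mul_mul_transpose_of_mul_self_eq (hA₀det : IsUnit A₀.det) (hS : S * S = A * A₀⁻¹)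
    (hfix : A₀ * Sᵀ * A₀⁻¹ = S) : A = S * A₀ * Sᵀ := by
  have hcomm : S * A₀ = A₀ * Sᵀ :=
    calc S * A₀ = A₀ * Sᵀ * A₀⁻¹ * A₀ := by rw [hfix]
      _ = A₀ * Sᵀ := by rw [Matrix.mul_assoc _ A₀⁻¹, nonsing_inv_mul _ hA₀det, Matrix.mul_one]
  calc A = S * S * A₀ := by rw [hS, Matrix.mul_assoc, nonsing_inv_mul _ hA₀det, Matrix.mul_one]
    _ = S * A₀ * Sᵀ := by rw [Matrix.mul_assoc S A₀, ← hcomm, Matrix.mul_assoc]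

end Congruence

theorem exists_contDiffAt_congr_of_isSymm {ι 𝕜 E : Type*} [Fintype ι] [DecidableEq ι] [RCLike 𝕜]
    [NormedAddCommGroup E] [NormedSpace 𝕜 E] {k : WithTop ℕ∞} {A : E → Matrix ι ι 𝕜} {x₀ : E}
    (hA : ContDiffAt 𝕜 k A x₀) (hsymm : ∀ᶠ x in 𝓝 x₀, (A x).IsSymm)
    (hdet : IsUnit (A x₀).det) :
    ∃ S : E → Matrix ι ι 𝕜, ContDiffAt 𝕜 k S x₀ ∧ S x₀ = 1 ∧
      ∀ᶠ x in 𝓝 x₀, A x = S x * A x₀ * (S x)ᵀ := by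
  obtain ⟨g, hg₁, hg, hg_mul_self, hg_mul_self_eq⟩ :=
    exists_contDiffAt_sqrt_near_one (𝕜 := 𝕜) (R := Matrix ι ι 𝕜)
  set A₀ := A x₀
  set C : E → Matrix ι ι 𝕜 := fun x => A x * A₀⁻¹
  have hC₀ : C x₀ = 1 := mul_nonsing_inv _ hdet
  have hC : ContDiffAt 𝕜 k C x₀ := hA.mul contDiffAt_const
  have hC_tendsto : Tendsto C (𝓝 x₀) (𝓝 1) := hC₀ ▸ hC.continuousAt.tendsto
  have hS_tendsto : Tendsto (fun x => g (C x)) (𝓝 x₀) (𝓝 1) :=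
    hg₁ ▸ hg.continuousAt.tendsto.comp hC_tendsto
  have hT_tendsto : Tendsto (fun x => A₀ * (g (C x))ᵀ * A₀⁻¹) (𝓝 x₀) (𝓝 1) := by
    have hconj : Continuous (fun Y : Matrix ι ι 𝕜 => A₀ * Yᵀ * A₀⁻¹) := by fun_prop
    simpa [Function.comp_def, mul_nonsing_inv _ hdet] using (hconj.tendsto 1).comp hS_tendsto
  have hg' : ContDiffAt 𝕜 k g (C x₀) := hC₀ ▸ hg.of_le le_top
  refine ⟨fun x => g (C x), hg'.comp x₀ hC, by simp [hC₀, hg₁], ?_⟩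
  filter_upwards [hsymm, hC_tendsto.eventually hg_mul_self, hT_tendsto.eventually hg_mul_self_eq]
    with x hx hSS hT
  refine eq_mul_mul_transpose_of_mul_self_eq hdet hSS ?_
  rw [← hT, transpose_conj_mul_self hx hsymm.self_of_nhds hdet hSS]

end Matrix

theorem stmt14_general {n : ℕ} (k : ℕ)
    (A : (Fin n → ℝ) → Fin n → Fin n → ℝ)
    (hA : ContDiffAt ℝ (k : ℕ) A 0)
    (hsymm : ∀ x, (Matrix.of (A x))ᵀ = Matrix.of (A x))
    (hdet : (Matrix.of (A 0)).det ≠ 0)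
    (P₀ : Matrix (Fin n) (Fin n) ℝ)
    (αv : Fin n → ℝ)
    (hfact : Matrix.of (A 0) = P₀ * Matrix.diagonal αv * P₀ᵀ) :
    ∃ ε > 0, ∃ M : (Fin n → ℝ) → Matrix (Fin n) (Fin n) ℝ,
      ContDiffOn ℝ (k : ℕ) (fun x (i j : Fin n) => M x i j) (ball 0 ε) ∧
      M 0 = P₀ ∧
      ∀ x ∈ ball (0 : Fin n → ℝ) ε,
        (M x).det ≠ 0 ∧ Matrix.of (A x) = M x * Matrix.diagonal αv * (M x)ᵀ := by
  let e : (Fin n → Fin n → ℝ) ≃L[ℝ] Matrix (Fin n) (Fin n) ℝ :=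
    (ofLinearEquiv ℝ).toContinuousLinearEquiv
  have hA' : ContDiffAt ℝ k (fun x => Matrix.of (A x)) 0 := e.contDiff.contDiffAt.comp 0 hA
  obtain ⟨S, hS, hS₀, hAS⟩ :=
    exists_contDiffAt_congr_of_isSymm hA' (.of_forall hsymm) (isUnit_iff_ne_zero.2 hdet)
  set M := fun x => S x * P₀
  have hM : ContDiffAt ℝ k M 0 := hS.mul contDiffAt_const
  have hM₀ : M 0 = P₀ := by simp [M, hS₀]
  have hP₀ : P₀.det ≠ 0 := by
    rw [hfact, det_mul, det_mul, det_transpose] at hdet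
    exact left_ne_zero_of_mul (left_ne_zero_of_mul hdet)
  have hdetM : ∀ᶠ x in 𝓝 0, (M x).det ≠ 0 :=
    (continuous_id.matrix_det.continuousAt.comp hM.continuousAt).eventually_ne
      (by simpa [hM₀] using hP₀)
  obtain ⟨u, hu, hMu⟩ := hM.contDiffOn le_rfl (by simp)
  obtain ⟨ε, hε, hball⟩ := Metric.mem_nhds_iff.1 (inter_mem hu (hdetM.and hAS))
  refine ⟨ε, hε, M, e.symm.contDiff.comp_contDiffOn (hMu.mono fun x hx => (hball hx).1), hM₀,
    fun x hx => ⟨(hball hx).2.1, ?_⟩⟩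
  rw [(hball hx).2.2, hfact]
  simp only [M, transpose_mul, Matrix.mul_assoc]

/-- A continuously varying symmetric matrix near a non-degenerate one factors through
the fixed diagonal matrix of eigenvalues via a `C^k` varying congruence
`A(x) = M(x) Λ M(x)ᵀ` with `M(0) = P₀`. -/
theorem stmt14 {n : ℕ} (k : ℕ) (hk : 1 ≤ k)
    (A : (Fin n → ℝ) → Fin n → Fin n → ℝ)
    (hA : ContDiffAt ℝ (k : ℕ) A 0)
    (hsymm : ∀ x, (Matrix.of (A x))ᵀ = Matrix.of (A x))
    (hdet : (Matrix.of (A 0)).det ≠ 0)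
    (P₀ : Matrix (Fin n) (Fin n) ℝ) (hP₀ : P₀ * P₀ᵀ = 1)
    (αv : Fin n → ℝ)
    (hfact : Matrix.of (A 0) = P₀ * Matrix.diagonal αv * P₀ᵀ) :
    ∃ ε > 0, ∃ M : (Fin n → ℝ) → Matrix (Fin n) (Fin n) ℝ,
      ContDiffOn ℝ (k : ℕ) (fun x (i j : Fin n) => M x i j) (ball 0 ε) ∧
      M 0 = P₀ ∧
      ∀ x ∈ ball (0 : Fin n → ℝ) ε,
        (M x).det ≠ 0 ∧ Matrix.of (A x) = M x * Matrix.diagonal αv * (M x)ᵀ :=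
  stmt14_general k A hA hsymm hdet P₀ αv hfact
end

section
/- (Morse lemma with explicit change of variables) Let φ : ℝⁿ → ℝ be C^{m+2} (m ≥ 2) with φ(0) = 0, ∇φ(0) = 0, and det Hess φ(0) ≠ 0. Let Λ = diag(α₁,…,αₙ) be the diagonal matrix of eigenvalues of Hess φ(0). Then there is a neighborhood U of 0 and a C^m diffeomorphism Φ : U → Φ(U) with Φ(0) = 0 and DΦ(0) = P₀ᵀ (P₀ the orthogonal matrix of eigenvectors of Hess φ(0)), such that φ(x) = ⟨Λ Φ(x), Φ(x)⟩/2 for all x ∈ U. -/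
open MeasureTheory Real Finset Matrix

noncomputable def pdR {n : ℕ} (j : Fin n) (f : (Fin n → ℝ) → ℝ) : (Fin n → ℝ) → ℝ :=
  fun x => fderiv ℝ f x (Pi.single j 1)

noncomputable def hess {n : ℕ} (φ : (Fin n → ℝ) → ℝ) (x : Fin n → ℝ) :
    Matrix (Fin n) (Fin n) ℝ :=
  Matrix.of fun i j => pdR i (pdR j φ) x

/-!
Taylor's formula with integral remainder gives `2 φ(x) = xᵀ H(x) x` for the `C^m` family of
symmetric matrices `H(x) = 2 ∫₀¹ (1 - t) Hess φ(t x) dt`, with `H(0) = P₀ Λ P₀ᵀ`. Near `0` we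
factor `H(x) = B(x)ᵀ Λ B(x)` with `B` of class `C^m` and `B(0) = P₀ᵀ`. After conjugating by `P₀`
this asks for `M(x)` with `M(x)ᵀ Λ M(x) = A(x)` where `A(0) = Λ`. Take
`M(x) = √(Λ⁻¹ A(x))`, the square root being the local inverse of `N ↦ N²` near `1`. Since `Λ` and
`A(x)` are symmetric, `Λ⁻¹ Mᵀ Λ` is a second square root of `Λ⁻¹ A(x)` near `1`, so it equals `M`,
and then `Mᵀ Λ M = Λ M² = A`. The chart `Φ(x) = B(x) x` then satisfies `φ = ⟨Λ Φ, Φ⟩ / 2`, and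
`DΦ(0) = B(0) = P₀ᵀ` is invertible, so by the inverse function theorem `Φ` is a `C^m`
diffeomorphism near `0`.
-/

open Filter Topology Set
open scoped ContDiff

-- An operator norm makes matrices a Banach algebra, as the square root above needs. Its topology
-- is not syntactically the one `Matrix` already carries, so integrals of matrices are taken
-- entrywise below.
attribute [local instance] Matrix.linftyOpNormedAddCommGroup Matrix.linftyOpNormedSpace
  Matrix.linftyOpNormedRing Matrix.linftyOpNormedAlgebra

universe u

section ParametricIntegral

variable {H F : Type u} [NormedAddCommGroup H] [NormedSpace ℝ H]
  [NormedAddCommGroup F] [NormedSpace ℝ F]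

theorem ContDiff.fderiv_uncurry_right {k : ℕ} {f : ℝ → H → F}
    (hf : ContDiff ℝ (k + 1) (Function.uncurry f)) :
    ContDiff ℝ k (Function.uncurry fun t x => fderiv ℝ (f t) x) :=
  ContDiff.fderiv (f := fun p : ℝ × H => f p.1) (hf.comp (contDiff_fst.fst.prodMk contDiff_snd))
    contDiff_snd le_rfl

variable [ProperSpace H]

theorem hasFDerivAt_intervalIntegral_of_contDiff {f : ℝ → H → F}
    (hf : ContDiff ℝ 1 (Function.uncurry f)) (a b : ℝ) (x₀ : H) :
    HasFDerivAt (fun x => ∫ t in a..b, f t x) (∫ t in a..b, fderiv ℝ (f t) x₀) x₀ := by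
  have hf' : Continuous (Function.uncurry fun t x => fderiv ℝ (f t) x) :=
    (ContDiff.fderiv_uncurry_right (k := 0) hf).continuous
  obtain ⟨C, hC⟩ := (isCompact_uIcc.prod (isCompact_closedBall x₀ 1)).exists_bound_of_continuousOn
    hf'.continuousOn
  have hslice {G : Type u} [TopologicalSpace G] {g : ℝ → H → G}
      (hg : Continuous (Function.uncurry g)) (x : H) :
      Continuous fun t => g t x := hg.comp (continuous_id.prodMk continuous_const)
  refine intervalIntegral.hasFDerivAt_integral_of_dominated_of_fderiv_le (bound := fun _ => C)
    (Metric.ball_mem_nhds x₀ one_pos)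
    (.of_forall fun x => (hslice hf.continuous x).aestronglyMeasurable)
    ((hslice hf.continuous x₀).intervalIntegrable _ _) (hslice hf' x₀).aestronglyMeasurable
    (.of_forall fun t ht x hx => hC (t, x) ⟨uIoc_subset_uIcc ht, Metric.ball_subset_closedBall hx⟩)
    intervalIntegrable_const (.of_forall fun t _ x _ => ?_)
  exact ((hf.comp (contDiff_const.prodMk contDiff_id)).differentiable one_ne_zero x).hasFDerivAt

theorem contDiff_intervalIntegral_of_contDiff (k : ℕ) {f : ℝ → H → F}
    (hf : ContDiff ℝ k (Function.uncurry f)) (a b : ℝ) :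
    ContDiff ℝ k (fun x => ∫ t in a..b, f t x) := by
  induction k generalizing F with
  | zero =>
    rw [Nat.cast_zero, contDiff_zero] at hf ⊢
    exact intervalIntegral.continuous_parametric_intervalIntegral_of_continuous'
      (f := fun x t => f t x) (hf.comp continuous_swap) a b
  | succ k ih =>
    have hf1 : ContDiff ℝ 1 (Function.uncurry f) := hf.of_le (by exact_mod_cast le_add_self)
    rw [Nat.cast_succ, contDiff_succ_iff_fderiv]
    refine ⟨fun x => (hasFDerivAt_intervalIntegral_of_contDiff hf1 a b x).differentiableAt,
      by simp, ?_⟩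
    rw [funext fun x => (hasFDerivAt_intervalIntegral_of_contDiff hf1 a b x).fderiv]
    exact ih (ContDiff.fderiv_uncurry_right hf)

end ParametricIntegral

section PartialDerivatives

variable {n : ℕ}

theorem contDiff_pdR {k : ℕ} {f : (Fin n → ℝ) → ℝ} (j : Fin n)
    (hf : ContDiff ℝ (k + 1 : ℕ) f) : ContDiff ℝ k (pdR j f) :=
  (ContinuousLinearMap.apply ℝ ℝ (Pi.single j (1 : ℝ))).contDiff.comp
    (hf.fderiv_right (by norm_cast))

theorem fderiv_apply_eq_sum_pdR {f : (Fin n → ℝ) → ℝ} (y v : Fin n → ℝ) :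
    fderiv ℝ f y v = ∑ j, v j * pdR j f y := by
  conv_lhs => rw [pi_eq_sum_univ' v]
  simp [pdR, map_sum]

theorem hasDerivAt_comp_smul {f : (Fin n → ℝ) → ℝ} (hf : Differentiable ℝ f)
    (x : Fin n → ℝ) (s : ℝ) :
    HasDerivAt (fun t : ℝ => f (t • x)) (∑ j, x j * pdR j f (s • x)) s := by
  have h := (hf (s • x)).hasFDerivAt.comp_hasDerivAt s ((hasDerivAt_id s).smul_const x)
  rwa [one_smul, fderiv_apply_eq_sum_pdR] at h

theorem pdR_pdR_eq_fderiv_fderiv {f : (Fin n → ℝ) → ℝ} (hf : ContDiff ℝ 2 f)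
    (x : Fin n → ℝ) (i j : Fin n) :
    pdR i (pdR j f) x = fderiv ℝ (fderiv ℝ f) x (Pi.single i 1) (Pi.single j 1) := by
  have hf' : DifferentiableAt ℝ (fderiv ℝ f) x :=
    (hf.fderiv_right (m := 1) le_rfl).differentiable one_ne_zero x
  have h := ((ContinuousLinearMap.apply ℝ ℝ (Pi.single j (1 : ℝ))).hasFDerivAt).comp x
    hf'.hasFDerivAt
  exact congrArg (· (Pi.single i 1)) h.fderiv

theorem hess_isSymm {φ : (Fin n → ℝ) → ℝ} (hφ : ContDiff ℝ 2 φ) (x : Fin n → ℝ) :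
    (hess φ x).IsSymm := by
  ext i j
  simp only [transpose_apply, hess, of_apply, pdR_pdR_eq_fderiv_fderiv hφ]
  exact second_derivative_symmetric (fun y => ((hφ.differentiable two_ne_zero) y).hasFDerivAt)
    ((hφ.fderiv_right (m := 1) le_rfl).differentiable one_ne_zero x).hasFDerivAt _ _

end PartialDerivatives

theorem taylor_integral_remainder_one_of_hasDerivAt {g g' g'' : ℝ → ℝ} {a b : ℝ}
    (hg : ∀ t ∈ uIcc a b, HasDerivAt g (g' t) t) (hg' : ∀ t ∈ uIcc a b, HasDerivAt g' (g'' t) t)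
    (hg'' : ContinuousOn g'' (uIcc a b)) :
    ∫ t in a..b, (b - t) * g'' t = g b - g a - (b - a) * g' a := by
  have hu : ∀ t ∈ uIcc a b,
      HasDerivAt (fun s => g s + (b - s) * g' s) ((b - t) * g'' t) t := fun t ht =>
    ((hg t ht).add (((hasDerivAt_id t).const_sub b).mul (hg' t ht))).congr_deriv (by simp)
  rw [intervalIntegral.integral_eq_sub_of_hasDerivAt hu
    (((continuousOn_const.sub continuousOn_id).mul hg'').intervalIntegrable)]
  ring

theorem dotProduct_of_intervalIntegral_mulVec {ι : Type*} [Fintype ι] {N : ℝ → Matrix ι ι ℝ}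
    {a b : ℝ} (hN : ∀ i j, IntervalIntegrable (fun t => N t i j) volume a b) (x : ι → ℝ) :
    x ⬝ᵥ (Matrix.of fun i j => ∫ t in a..b, N t i j) *ᵥ x = ∫ t in a..b, x ⬝ᵥ N t *ᵥ x := by
  have hent : ∀ i j, IntervalIntegrable (fun t => x i * (N t i j * x j)) volume a b :=
    fun i j => ((hN i j).mul_const (x j)).const_mul (x i)
  have hrow : ∀ i, IntervalIntegrable (fun t => ∑ j, x i * (N t i j * x j)) volume a b :=
    fun i => by simpa only [Finset.sum_fn] using IntervalIntegrable.sum univ fun j _ => hent i j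
  calc x ⬝ᵥ (Matrix.of fun i j => ∫ t in a..b, N t i j) *ᵥ x
      = ∑ i, ∑ j, ∫ t in a..b, x i * (N t i j * x j) := by
        simp only [dotProduct, mulVec, of_apply, Finset.mul_sum,
          intervalIntegral.integral_mul_const, intervalIntegral.integral_const_mul]
    _ = ∫ t in a..b, ∑ i, ∑ j, x i * (N t i j * x j) := by
        rw [intervalIntegral.integral_finsetSum fun i _ => hrow i]
        exact sum_congr rfl fun i _ =>
          (intervalIntegral.integral_finsetSum fun j _ => hent i j).symm
    _ = ∫ t in a..b, x ⬝ᵥ N t *ᵥ x := by simp only [dotProduct, mulVec, Finset.mul_sum]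

section TaylorHessian

variable {n : ℕ}

noncomputable def taylorHess (φ : (Fin n → ℝ) → ℝ) (x : Fin n → ℝ) : Matrix (Fin n) (Fin n) ℝ :=
  Matrix.of fun i j => ∫ t in (0 : ℝ)..1, ((2 * (1 - t)) • hess φ (t • x)) i j

theorem contDiff_taylorHess {k : ℕ} {φ : (Fin n → ℝ) → ℝ} (hφ : ContDiff ℝ (k + 2 : ℕ) φ) :
    ContDiff ℝ k (taylorHess φ) :=
  ((Matrix.ofLinearEquiv ℝ).toContinuousLinearEquiv.contDiff.comp <|
    contDiff_pi.2 fun i => contDiff_pi.2 fun j => contDiff_intervalIntegral_of_contDiff k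
      (f := fun t x => ((2 * (1 - t)) • hess φ (t • x)) i j)
      ((contDiff_const.mul (contDiff_const.sub contDiff_fst)).mul
        ((contDiff_pdR i (contDiff_pdR j hφ)).comp (contDiff_fst.smul contDiff_snd))) 0 1 :)

theorem taylorHess_zero (φ : (Fin n → ℝ) → ℝ) : taylorHess φ 0 = hess φ 0 := by
  ext i j
  simp [taylorHess, intervalIntegral.integral_mul_const,
    intervalIntegral.integral_comp_sub_left fun t : ℝ => t]

theorem taylorHess_isSymm {φ : (Fin n → ℝ) → ℝ} (hφ : ContDiff ℝ 2 φ) (x : Fin n → ℝ) :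
    (taylorHess φ x).IsSymm := by
  ext i j
  simp only [taylorHess, transpose_apply, of_apply, Matrix.smul_apply, (hess_isSymm hφ _).apply]

theorem hasDerivAt_sum_mul_pdR_comp_smul {φ : (Fin n → ℝ) → ℝ} (hφ : ContDiff ℝ 2 φ)
    (x : Fin n → ℝ) (s : ℝ) :
    HasDerivAt (fun t => ∑ j, x j * pdR j φ (t • x)) (x ⬝ᵥ hess φ (s • x) *ᵥ x) s := by
  have hd : ∀ j, Differentiable ℝ (pdR j φ) := fun j =>
    (contDiff_pdR (k := 1) j hφ).differentiable one_ne_zero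
  refine (HasDerivAt.fun_sum fun j _ =>
    (hasDerivAt_comp_smul (hd j) x s).const_mul (x j)).congr_deriv ?_
  simp only [dotProduct, mulVec, hess, of_apply, Finset.mul_sum]
  rw [Finset.sum_comm]
  exact sum_congr rfl fun j _ => sum_congr rfl fun i _ => by ring

theorem dotProduct_taylorHess_mulVec {φ : (Fin n → ℝ) → ℝ} (hφ : ContDiff ℝ 2 φ) (h0 : φ 0 = 0)
    (hgrad : ∀ j, pdR j φ 0 = 0) (x : Fin n → ℝ) :
    x ⬝ᵥ taylorHess φ x *ᵥ x = 2 * φ x := by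
  have hc : ∀ i j, Continuous fun t : ℝ => hess φ (t • x) i j := fun i j =>
    (contDiff_pdR (k := 0) i (contDiff_pdR j hφ)).continuous.comp
      (continuous_id.smul continuous_const)
  have htaylor := taylor_integral_remainder_one_of_hasDerivAt (a := 0) (b := 1)
    (fun s _ => hasDerivAt_comp_smul (hφ.differentiable two_ne_zero) x s)
    (fun s _ => hasDerivAt_sum_mul_pdR_comp_smul hφ x s)
    (by simp only [dotProduct, mulVec]; fun_prop :
      Continuous fun t => x ⬝ᵥ hess φ (t • x) *ᵥ x).continuousOn
  simp only [zero_smul, one_smul, h0, hgrad, mul_zero, Finset.sum_const_zero, sub_zero] at htaylor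
  rw [taylorHess, dotProduct_of_intervalIntegral_mulVec
    (N := fun t => (2 * (1 - t)) • hess φ (t • x)) fun i j =>
      ((by fun_prop : Continuous fun t : ℝ => 2 * (1 - t)).mul (hc i j)).intervalIntegrable 0 1]
  simp only [smul_mulVec, dotProduct_smul, smul_eq_mul, mul_assoc,
    intervalIntegral.integral_const_mul, htaylor]

end TaylorHessian

theorem exists_contDiffAt_sqrt_near_one_s15 (R : Type*) [NormedRing R] [NormedAlgebra ℝ R]
    [CompleteSpace R] :
    ∃ s : R → R, s 1 = 1 ∧ ContDiffAt ℝ ∞ s 1 ∧ ∀ᶠ y in 𝓝 1, s (y * y) = y ∧ s y * s y = y := by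
  let two : R ≃L[ℝ] R := ContinuousLinearEquiv.smulLeft (Units.mk0 (2 : ℝ) two_ne_zero)
  have hsq : HasFDerivAt (fun y : R => y * y) (two : R →L[ℝ] R) 1 := by
    refine ((hasFDerivAt_id (1 : R)).mul' (hasFDerivAt_id (1 : R))).congr_fderiv ?_
    ext y
    simp [two, two_smul]
  have hsq' : ContDiffAt ℝ ∞ (fun y : R => y * y) 1 := (contDiff_id.mul contDiff_id).contDiffAt
  have hne : (∞ : WithTop ℕ∞) ≠ 0 := by simp
  have hstrict := hsq'.hasStrictFDerivAt' hsq hne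
  refine ⟨hsq'.localInverse hsq hne, ?_, ?_, ?_⟩
  · simpa using hsq'.localInverse_apply_image hsq hne
  · simpa using hsq'.to_localInverse hsq hne
  · have := hstrict.eventually_right_inverse
    simp only [one_mul] at this
    exact hstrict.eventually_left_inverse.and this

section MatrixAlgebra

variable {ι α : Type*} [Fintype ι] [CommRing α]

theorem Matrix.mulVec_mulVec_dotProduct_mulVec (Λ B : Matrix ι ι α) (x : ι → α) :
    Λ *ᵥ (B *ᵥ x) ⬝ᵥ B *ᵥ x = x ⬝ᵥ (Bᵀ * Λ * B) *ᵥ x := by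
  rw [← mulVec_mulVec, ← mulVec_mulVec, dotProduct_mulVec x Bᵀ, vecMul_transpose, dotProduct_comm]

variable [DecidableEq ι]

theorem Matrix.inv_mul_transpose_mul_mul_self {Λ A M : Matrix ι ι α} (hΛ : IsUnit Λ.det)
    (hΛs : Λ.IsSymm) (hAs : A.IsSymm) (hM : M * M = Λ⁻¹ * A) :
    (Λ⁻¹ * Mᵀ * Λ) * (Λ⁻¹ * Mᵀ * Λ) = Λ⁻¹ * A := by
  calc (Λ⁻¹ * Mᵀ * Λ) * (Λ⁻¹ * Mᵀ * Λ) = Λ⁻¹ * (M * M)ᵀ * Λ := by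
        simp only [Matrix.mul_assoc, transpose_mul, mul_nonsing_inv_cancel_left _ _ hΛ]
    _ = Λ⁻¹ * A := by
        rw [hM, transpose_mul, hAs.eq, transpose_nonsing_inv, hΛs.eq, Matrix.mul_assoc,
          Matrix.mul_assoc, nonsing_inv_mul _ hΛ, Matrix.mul_one]

theorem Matrix.transpose_mul_mul_eq_of_inv_mul_transpose_mul_eq {Λ A M : Matrix ι ι α}
    (hΛ : IsUnit Λ.det) (hM : M * M = Λ⁻¹ * A) (hself : Λ⁻¹ * Mᵀ * Λ = M) :
    Mᵀ * Λ * M = A := by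
  have hcomm : Mᵀ * Λ = Λ * M := by
    conv_rhs => rw [← hself, ← Matrix.mul_assoc, ← Matrix.mul_assoc, mul_nonsing_inv _ hΛ,
      Matrix.one_mul]
  rw [hcomm, Matrix.mul_assoc, hM, mul_nonsing_inv_cancel_left _ _ hΛ]

end MatrixAlgebra

section SymmetricFactorization

variable {ι E : Type*} [Fintype ι] [DecidableEq ι] [NormedAddCommGroup E] [NormedSpace ℝ E]
  {k : ℕ} {x₀ : E} {A : E → Matrix ι ι ℝ} {Λ : Matrix ι ι ℝ}

theorem exists_contDiffAt_transpose_mul_mul_eq_of_apply_eq (hA : ContDiffAt ℝ k A x₀)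
    (hAs : ∀ᶠ x in 𝓝 x₀, (A x).IsSymm) (hΛ : IsUnit Λ.det) (hΛs : Λ.IsSymm) (hA₀ : A x₀ = Λ) :
    ∃ M : E → Matrix ι ι ℝ, ContDiffAt ℝ k M x₀ ∧ M x₀ = 1 ∧
      ∀ᶠ x in 𝓝 x₀, (M x)ᵀ * Λ * M x = A x := by
  obtain ⟨s, hs₁, hs, hs_inv⟩ := exists_contDiffAt_sqrt_near_one_s15 (Matrix ι ι ℝ)
  have hB : ContDiffAt ℝ k (fun x => Λ⁻¹ * A x) x₀ := contDiffAt_const.mul hA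
  have hB₀ : Λ⁻¹ * A x₀ = 1 := by rw [hA₀, nonsing_inv_mul _ hΛ]
  set M := fun x => s (Λ⁻¹ * A x)
  have hM : ContDiffAt ℝ k M x₀ := by
    refine ContDiffAt.comp x₀ ?_ hB
    rw [hB₀]
    exact hs.of_le (by exact_mod_cast le_top)
  have hM₀ : M x₀ = 1 := by simp only [M, hB₀, hs₁]
  have hB_tendsto : Tendsto (fun x => Λ⁻¹ * A x) (𝓝 x₀) (𝓝 1) :=
    hB₀ ▸ hB.continuousAt.tendsto
  have hadj_tendsto : Tendsto (fun x => Λ⁻¹ * (M x)ᵀ * Λ) (𝓝 x₀) (𝓝 1) := by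
    have hτ := (transposeLinearEquiv ι ι ℝ ℝ).toContinuousLinearEquiv.continuous
    have hc : Continuous fun N : Matrix ι ι ℝ => Λ⁻¹ * Nᵀ * Λ :=
      (continuous_const.mul hτ).mul continuous_const
    have := (hc.tendsto 1).comp (hM₀ ▸ hM.continuousAt.tendsto)
    simpa [Function.comp_def, nonsing_inv_mul _ hΛ] using this
  refine ⟨M, hM, hM₀, ?_⟩
  filter_upwards [hB_tendsto.eventually hs_inv, hadj_tendsto.eventually hs_inv, hAs]
    with x hsqrt hadj hAx
  have hsq := hsqrt.2
  have hself := hadj.1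
  refine transpose_mul_mul_eq_of_inv_mul_transpose_mul_eq hΛ hsq ?_
  rw [inv_mul_transpose_mul_mul_self hΛ hΛs hAx hsq] at hself
  exact hself.symm

theorem exists_contDiffAt_transpose_mul_mul_eq (hA : ContDiffAt ℝ k A x₀)
    (hAs : ∀ᶠ x in 𝓝 x₀, (A x).IsSymm) (hΛ : IsUnit Λ.det) (hΛs : Λ.IsSymm) {Q : Matrix ι ι ℝ}
    (hQ : IsUnit Q.det) (hA₀ : A x₀ = Qᵀ * Λ * Q) :
    ∃ B : E → Matrix ι ι ℝ, ContDiffAt ℝ k B x₀ ∧ B x₀ = Q ∧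
      ∀ᶠ x in 𝓝 x₀, (B x)ᵀ * Λ * B x = A x := by
  have hQT : (Q⁻¹)ᵀ * Qᵀ = 1 := by rw [← transpose_mul, mul_nonsing_inv _ hQ, transpose_one]
  obtain ⟨M, hM, hM₀, hMeq⟩ := exists_contDiffAt_transpose_mul_mul_eq_of_apply_eq
    (A := fun x => (Q⁻¹)ᵀ * A x * Q⁻¹) (contDiffAt_const.mul hA |>.mul contDiffAt_const)
    (hAs.mono fun x hx => by simp [IsSymm, transpose_mul, hx.eq, Matrix.mul_assoc]) hΛ hΛs
    (by simp only [hA₀, Matrix.mul_assoc, mul_nonsing_inv _ hQ, Matrix.mul_one,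
      ← Matrix.mul_assoc (Q⁻¹)ᵀ, hQT, Matrix.one_mul])
  refine ⟨fun x => M x * Q, hM.mul contDiffAt_const, by simp [hM₀], ?_⟩
  filter_upwards [hMeq] with x hx
  calc (M x * Q)ᵀ * Λ * (M x * Q) = Qᵀ * ((M x)ᵀ * Λ * M x) * Q := by
        simp only [transpose_mul, Matrix.mul_assoc]
    _ = A x := by
        have hQT' : Qᵀ * (Q⁻¹)ᵀ = 1 := by
          rw [← transpose_mul, nonsing_inv_mul _ hQ, transpose_one]
        simp only [hx, ← Matrix.mul_assoc, hQT', Matrix.one_mul,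
          nonsing_inv_mul_cancel_right _ _ hQ]

end SymmetricFactorization

theorem ContDiffAt.exists_localDiffeomorph_subset {E F : Type*} [NormedAddCommGroup E]
    [NormedSpace ℝ E] [CompleteSpace E] [NormedAddCommGroup F] [NormedSpace ℝ F] {f : E → F}
    {f' : E ≃L[ℝ] F} {a : E} {k : ℕ} (hf : ContDiffAt ℝ k f a)
    (hf' : HasFDerivAt f (f' : E →L[ℝ] F) a) (hk : k ≠ 0) {s : Set E} (hs : s ∈ 𝓝 a) :
    ∃ U ⊆ s, IsOpen U ∧ a ∈ U ∧ ContDiffOn ℝ k f U ∧ InjOn f U ∧ IsOpen (f '' U) ∧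
      ∃ g : F → E, ContDiffOn ℝ k g (f '' U) ∧ ∀ x ∈ U, g (f x) = x := by
  have hk' : (k : WithTop ℕ∞) ≠ 0 := by exact_mod_cast hk
  let e := hf.toOpenPartialHomeomorph f hf' hk'
  have he : ⇑e = f := rfl
  have ha : a ∈ e.source := hf.mem_toOpenPartialHomeomorph_source hf' hk'
  have hg : ContDiffAt ℝ k e.symm (f a) := hf.to_localInverse hf' hk'
  obtain ⟨V, hV, hfV⟩ := hf.contDiffOn le_rfl (by simp)
  obtain ⟨W, hW, hgW⟩ := hg.contDiffOn le_rfl (by simp)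
  obtain ⟨U, hUsub, hUopen, haU⟩ := mem_nhds_iff.1 <|
    inter_mem (inter_mem hs hV)
      (inter_mem (e.open_source.mem_nhds ha) (hf.continuousAt.preimage_mem_nhds hW))
  have hUe : U ⊆ e.source := fun x hx => (hUsub hx).2.1
  refine ⟨U, fun x hx => (hUsub hx).1.1, hUopen, haU, hfV.mono fun x hx => (hUsub hx).1.2,
    e.injOn.mono hUe, he ▸ e.isOpen_image_of_subset_source hUopen hUe, e.symm,
    hgW.mono ?_, fun x hx => e.left_inv (hUe hx)⟩
  rintro _ ⟨x, hx, rfl⟩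
  exact (hUsub hx).2.2

section MulVec

variable {m n : Type*} [Fintype m] [Fintype n]

noncomputable def Matrix.mulVecL (m n : Type*) [Fintype m] [Fintype n] :
    Matrix m n ℝ →L[ℝ] (n → ℝ) →L[ℝ] m → ℝ :=
  LinearMap.toContinuousLinearMap (LinearMap.toContinuousLinearMap.toLinearMap ∘ₗ mulVecBilin ℝ ℝ)

@[simp]
theorem Matrix.mulVecL_apply (M : Matrix m n ℝ) (v : n → ℝ) : mulVecL m n M v = M *ᵥ v := rfl

theorem ContDiffAt.matrix_mulVec {E : Type*} [NormedAddCommGroup E] [NormedSpace ℝ E] {k : ℕ}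
    {B : E → Matrix m n ℝ} {v : E → n → ℝ} {x : E} (hB : ContDiffAt ℝ k B x)
    (hv : ContDiffAt ℝ k v x) : ContDiffAt ℝ k (fun y => B y *ᵥ v y) x :=
  ((mulVecL m n).contDiff.contDiffAt.comp x hB).clm_apply hv

theorem hasFDerivAt_mulVec_self_zero {B : (n → ℝ) → Matrix m n ℝ} (hB : DifferentiableAt ℝ B 0) :
    HasFDerivAt (fun x => B x *ᵥ x) (mulVecL m n (B 0)) 0 := by
  have := ((mulVecL m n).hasFDerivAt.comp 0 hB.hasFDerivAt).clm_apply (hasFDerivAt_id 0)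
  simpa using this

end MulVec

/-- Morse lemma with explicit change of variables: for `φ ∈ C^{m+2}` with
non-degenerate critical point at `0` and `Hess φ(0) = P₀ Λ P₀ᵀ`, there is a `C^m`
diffeomorphism `Φ` near `0` with `Φ(0) = 0`, `DΦ(0) = P₀ᵀ`, and
`φ(x) = ⟨ΛΦ(x),Φ(x)⟩/2`. -/
theorem stmt15 {n m : ℕ} (hm : 2 ≤ m) (φ : (Fin n → ℝ) → ℝ)
    (hφ : ContDiff ℝ (m + 2 : ℕ) φ) (h0 : φ 0 = 0)
    (hgrad : ∀ j, pdR j φ 0 = 0) (hdet : (hess φ 0).det ≠ 0)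
    (P₀ : Matrix (Fin n) (Fin n) ℝ) (hP₀ : P₀ * P₀ᵀ = 1) (αv : Fin n → ℝ)
    (hfact : hess φ 0 = P₀ * Matrix.diagonal αv * P₀ᵀ) :
    ∃ U : Set (Fin n → ℝ), IsOpen U ∧ (0 : Fin n → ℝ) ∈ U ∧
      ∃ Φ : (Fin n → ℝ) → (Fin n → ℝ),
        ContDiffOn ℝ (m : ℕ) Φ U ∧ Φ 0 = 0 ∧
        (∀ v : Fin n → ℝ, fderiv ℝ Φ 0 v = P₀ᵀ.mulVec v) ∧
        Set.InjOn Φ U ∧ IsOpen (Φ '' U) ∧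
        (∃ ψ : (Fin n → ℝ) → (Fin n → ℝ),
          ContDiffOn ℝ (m : ℕ) ψ (Φ '' U) ∧ ∀ x ∈ U, ψ (Φ x) = x) ∧
        ∀ x ∈ U, φ x = ((Matrix.diagonal αv).mulVec (Φ x) ⬝ᵥ Φ x) / 2 := by
  have hm₀ : m ≠ 0 := by omega
  have hφ₂ : ContDiff ℝ 2 φ := hφ.of_le (by exact_mod_cast (by omega : 2 ≤ m + 2))
  have hP₀' : P₀ᵀ * P₀ = 1 := mul_eq_one_comm.mp hP₀
  have hQ : IsUnit P₀ᵀ.det := IsUnit.of_mul_eq_one P₀.det (by rw [← det_mul, hP₀', det_one])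
  have hΛ : IsUnit (diagonal αv).det :=
    isUnit_iff_ne_zero.2 fun h => hdet (by rw [hfact, det_mul, det_mul, h, mul_zero, zero_mul])
  obtain ⟨B, hB, hB₀, hBΛ⟩ := exists_contDiffAt_transpose_mul_mul_eq
    (contDiff_taylorHess hφ).contDiffAt (.of_forall (taylorHess_isSymm hφ₂)) hΛ
    (isSymm_diagonal αv) hQ (by rw [taylorHess_zero, hfact, transpose_transpose])
  have hΦ : HasFDerivAt (fun x => B x *ᵥ x)
      ((toLin'OfInv hP₀ hP₀').toContinuousLinearEquiv : (Fin n → ℝ) →L[ℝ] Fin n → ℝ) 0 :=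
    (hasFDerivAt_mulVec_self_zero (hB.differentiableAt (by exact_mod_cast hm₀))).congr_fderiv <| by
      ext1 v
      simp only [hB₀, mulVecL_apply]
      rfl
  obtain ⟨U, hUΛ, hU, h0U, hΦU, hinj, hopen, ψ, hψ, hψΦ⟩ :=
    (hB.matrix_mulVec contDiffAt_id).exists_localDiffeomorph_subset hΦ hm₀ hBΛ
  refine ⟨U, hU, h0U, fun x => B x *ᵥ x, hΦU, mulVec_zero _, fun v => by rw [hΦ.fderiv]; rfl,
    hinj, hopen, ⟨ψ, hψ, hψΦ⟩, fun x hx => ?_⟩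
  rw [mulVec_mulVec_dotProduct_mulVec, hUΛ hx, dotProduct_taylorHess_mulVec hφ₂ h0 hgrad]
  ring
end
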